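/- If u, v ∈ ℝ satisfy u² ≠ v², then the point e = (0, 0, u, 0, 0, v) is an equilibrium of the so(4) free rigid body system and is Lyapunov stable. -/

import Mathlib

/-!
Besides the Casimirs `C₁ = ‖x‖² + ‖y‖²` and `C₂ = x · y`, the flow conserves a quadratic form `Q`
in `x₁, x₂, y₁, y₂` whose coefficients are positive when `λ₁ > λ₂ > λ₃ > λ₄`. Hence
`V = Q + (C₁ - u² - v²)² + (C₂ - uv)²` is a conserved quantity vanishing at `e`. Its zeros have
`x₁ = x₂ = y₁ = y₂ = 0` and `(x₃ ± y₃)² = (u ± v)²`; when `u² ≠ v²` the point `e` is isolated among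
them, so `e` is a strict local minimum of `V` and Lyapunov's argument applies.
-/

noncomputable section

/-- The right-hand side of the so(4) free rigid body system on ℝ⁶,
coordinates `(x1,x2,x3,y1,y2,y3) = (p 0, p 1, p 2, p 3, p 4, p 5)`. -/
def vf (l1 l2 l3 l4 : ℝ) (p : Fin 6 → ℝ) : Fin 6 → ℝ :=
  ![(1/(l1+l2) - 1/(l1+l3)) * (p 1 * p 2) + (1/(l3+l4) - 1/(l2+l4)) * (p 4 * p 5),
    (1/(l2+l3) - 1/(l1+l2)) * (p 0 * p 2) + (1/(l1+l4) - 1/(l3+l4)) * (p 3 * p 5),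
    (1/(l1+l3) - 1/(l2+l3)) * (p 0 * p 1) + (1/(l2+l4) - 1/(l1+l4)) * (p 3 * p 4),
    (1/(l3+l4) - 1/(l1+l3)) * (p 1 * p 5) + (1/(l1+l2) - 1/(l2+l4)) * (p 2 * p 4),
    (1/(l2+l3) - 1/(l3+l4)) * (p 0 * p 5) + (1/(l1+l4) - 1/(l1+l2)) * (p 2 * p 3),
    (1/(l2+l4) - 1/(l2+l3)) * (p 0 * p 4) + (1/(l1+l3) - 1/(l1+l4)) * (p 1 * p 3)]

/-- Lyapunov stability of an equilibrium `e` of the so(4) free rigid body system: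
for every ε > 0 there is δ > 0 such that every differentiable solution starting
δ-close to `e` stays ε-close to `e` for all t ≥ 0. -/
def IsLyapunovStable (l1 l2 l3 l4 : ℝ) (e : Fin 6 → ℝ) : Prop :=
  ∀ ε > 0, ∃ δ > 0, ∀ f : ℝ → (Fin 6 → ℝ),
    (∀ t : ℝ, HasDerivAt f (vf l1 l2 l3 l4 (f t)) t) →
    ‖f 0 - e‖ < δ → ∀ t ≥ 0, ‖f t - e‖ < ε

open Metric Set

theorem exists_dist_lt_of_strictLocalMin {X : Type*} [PseudoMetricSpace X] [ProperSpace X]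
    {V : X → ℝ} {e : X} {r : ℝ} (hV : Continuous V) (hr : 0 < r)
    (hmin : ∀ p, p ≠ e → dist p e < r → V e < V p) {ε : ℝ} (hε : 0 < ε) :
    ∃ δ > 0, ∀ γ : ℝ → X, Continuous γ → (∀ t ≥ 0, V (γ t) ≤ V (γ 0)) →
      dist (γ 0) e < δ → ∀ t ≥ 0, dist (γ t) e < ε := by
  set ρ := min ε (r / 2)
  have hρ : 0 < ρ := lt_min hε (half_pos hr)
  obtain ⟨m, hem, hm⟩ : ∃ m, V e < m ∧ ∀ p ∈ sphere e ρ, m ≤ V p := by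
    refine (isCompact_sphere e ρ).exists_forall_le' hV.continuousOn fun p hp => ?_
    refine hmin p (ne_of_mem_sphere hp hρ.ne') ?_
    rw [mem_sphere.1 hp]
    linarith [min_le_right ε (r / 2)]
  obtain ⟨δ, hδ, hδm⟩ :=
    Metric.eventually_nhds_iff.1 (hV.continuousAt.eventually (gt_mem_nhds hem))
  refine ⟨min δ ρ, lt_min hδ hρ, fun γ hγ hV_le h0 t ht => ?_⟩
  by_contra! hfar
  obtain ⟨s, hs, hsρ⟩ : ∃ s ∈ Icc 0 t, dist (γ s) e = ρ :=
    intermediate_value_Icc ht (hγ.dist continuous_const).continuousOn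
      ⟨(h0.trans_le (min_le_right _ _)).le, (min_le_left _ _).trans hfar⟩
  linarith [hm (γ s) (mem_sphere.2 hsρ), hV_le s hs.1, hδm (h0.trans_le (min_le_left _ _))]

def casimirSq (p : Fin 6 → ℝ) : ℝ :=
  p 0 ^ 2 + p 1 ^ 2 + p 2 ^ 2 + p 3 ^ 2 + p 4 ^ 2 + p 5 ^ 2

def casimirDot (p : Fin 6 → ℝ) : ℝ :=
  p 0 * p 3 + p 1 * p 4 + p 2 * p 5

/-- The coefficients are chosen so that the cubic terms of the derivative along `vf` cancel in
pairs. -/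
def quadIntegral (l1 l2 l3 l4 : ℝ) (p : Fin 6 → ℝ) : ℝ :=
  (l1 - l3) * (l1 - l4) * (l2 - l4) / (l2 + l3) * p 0 ^ 2
    + (l1 - l4) * (l2 - l3) * (l2 - l4) / (l1 + l3) * p 1 ^ 2
    + (l1 - l3) * (l2 - l3) * (l2 - l4) / (l1 + l4) * p 3 ^ 2
    + (l1 - l3) * (l1 - l4) * (l2 - l3) / (l2 + l4) * p 4 ^ 2

def lyapunovFn (l1 l2 l3 l4 u v : ℝ) (p : Fin 6 → ℝ) : ℝ :=
  quadIntegral l1 l2 l3 l4 p + (casimirSq p - (u ^ 2 + v ^ 2)) ^ 2 + (casimirDot p - u * v) ^ 2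

lemma continuous_lyapunovFn (l1 l2 l3 l4 u v : ℝ) : Continuous (lyapunovFn l1 l2 l3 l4 u v) := by
  unfold lyapunovFn quadIntegral casimirSq casimirDot
  fun_prop

lemma lyapunovFn_equilibrium (l1 l2 l3 l4 u v : ℝ) :
    lyapunovFn l1 l2 l3 l4 u v ![0, 0, u, 0, 0, v] = 0 := by
  simp [lyapunovFn, quadIntegral, casimirSq, casimirDot]

lemma eq_of_forall_hasDerivAt_zero {G : Type*} [NormedAddCommGroup G] [NormedSpace ℝ G]
    {g : ℝ → G} (hg : ∀ t, HasDerivAt g 0 t) (a b : ℝ) : g a = g b :=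
  is_const_of_deriv_eq_zero (fun t => (hg t).differentiableAt) (fun t => (hg t).deriv) a b

section Solution

variable {l1 l2 l3 l4 : ℝ} {f : ℝ → Fin 6 → ℝ} (hf : ∀ t, HasDerivAt f (vf l1 l2 l3 l4 (f t)) t)
include hf

lemma casimirSq_comp_solution (t : ℝ) : casimirSq (f t) = casimirSq (f 0) := by
  refine eq_of_forall_hasDerivAt_zero (g := fun s => casimirSq (f s)) (fun s => ?_) t 0
  have h i := hasDerivAt_pi.1 (hf s) i
  unfold casimirSq
  refine (((((((h 0).pow 2).add ((h 1).pow 2)).add ((h 2).pow 2)).add ((h 3).pow 2)).add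
    ((h 4).pow 2)).add ((h 5).pow 2)).congr_deriv ?_
  simp only [vf, Matrix.cons_val_zero, Matrix.cons_val_one, Matrix.cons_val, Fin.isValue]
  ring

lemma casimirDot_comp_solution (t : ℝ) : casimirDot (f t) = casimirDot (f 0) := by
  refine eq_of_forall_hasDerivAt_zero (g := fun s => casimirDot (f s)) (fun s => ?_) t 0
  have h i := hasDerivAt_pi.1 (hf s) i
  unfold casimirDot
  refine ((((h 0).mul (h 3)).add ((h 1).mul (h 4))).add ((h 2).mul (h 5))).congr_deriv ?_
  simp only [vf, Matrix.cons_val_zero, Matrix.cons_val_one, Matrix.cons_val, Fin.isValue]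
  ring

lemma quadIntegral_comp_solution (h12 : l1 + l2 ≠ 0) (h13 : l1 + l3 ≠ 0) (h14 : l1 + l4 ≠ 0)
    (h23 : l2 + l3 ≠ 0) (h24 : l2 + l4 ≠ 0) (h34 : l3 + l4 ≠ 0) (t : ℝ) :
    quadIntegral l1 l2 l3 l4 (f t) = quadIntegral l1 l2 l3 l4 (f 0) := by
  refine eq_of_forall_hasDerivAt_zero (g := fun s => quadIntegral l1 l2 l3 l4 (f s))
    (fun s => ?_) t 0
  have h i := hasDerivAt_pi.1 (hf s) i
  unfold quadIntegral
  refine (((((h 0).pow 2).const_mul _).add (((h 1).pow 2).const_mul _)).add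
    (((h 3).pow 2).const_mul _) |>.add (((h 4).pow 2).const_mul _)).congr_deriv ?_
  simp only [vf, Matrix.cons_val_zero, Matrix.cons_val_one, Matrix.cons_val, Fin.isValue]
  field_simp
  ring

lemma lyapunovFn_comp_solution (h12 : l1 + l2 ≠ 0) (h13 : l1 + l3 ≠ 0) (h14 : l1 + l4 ≠ 0)
    (h23 : l2 + l3 ≠ 0) (h24 : l2 + l4 ≠ 0) (h34 : l3 + l4 ≠ 0) (u v t : ℝ) :
    lyapunovFn l1 l2 l3 l4 u v (f t) = lyapunovFn l1 l2 l3 l4 u v (f 0) := by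
  simp only [lyapunovFn, casimirSq_comp_solution hf, casimirDot_comp_solution hf,
    quadIntegral_comp_solution hf h12 h13 h14 h23 h24 h34]

end Solution

lemma eq_of_sq_eq_sq_of_abs_sub_lt {x y : ℝ} (h : x ^ 2 = y ^ 2) (hxy : |x - y| < 2 * |y|) :
    x = y := by
  rcases sq_eq_sq_iff_eq_or_eq_neg.1 h with h | rfl
  · exact h
  · rw [show -y - y = -(2 * y) by ring, abs_neg, abs_mul, abs_two] at hxy
    exact absurd hxy (lt_irrefl _)

lemma eq_of_sq_add_sq_eq_of_mul_eq {a b u v : ℝ} (hsq : a ^ 2 + b ^ 2 = u ^ 2 + v ^ 2)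
    (hmul : a * b = u * v) (hplus : |a - u| + |b - v| < 2 * |u + v|)
    (hminus : |a - u| + |b - v| < 2 * |u - v|) : a = u ∧ b = v := by
  have hsum : a + b = u + v := by
    refine eq_of_sq_eq_sq_of_abs_sub_lt (by linear_combination hsq + 2 * hmul) ?_
    calc |a + b - (u + v)| = |(a - u) + (b - v)| := by ring_nf
      _ ≤ |a - u| + |b - v| := abs_add_le _ _
      _ < 2 * |u + v| := hplus
  have hdiff : a - b = u - v := by
    refine eq_of_sq_eq_sq_of_abs_sub_lt (by linear_combination hsq - 2 * hmul) ?_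
    calc |a - b - (u - v)| = |(a - u) - (b - v)| := by ring_nf
      _ ≤ |a - u| + |b - v| := abs_sub _ _
      _ < 2 * |u - v| := hminus
  constructor <;> linarith

lemma eq_zero_of_quadIntegral_nonpos {l1 l2 l3 l4 : ℝ} (h12 : l2 < l1) (h23 : l3 < l2)
    (h34 : l4 < l3) (s13 : 0 < l1 + l3) (s14 : 0 < l1 + l4) (s23 : 0 < l2 + l3)
    (s24 : 0 < l2 + l4) {p : Fin 6 → ℝ} (hp : quadIntegral l1 l2 l3 l4 p ≤ 0) :
    p 0 = 0 ∧ p 1 = 0 ∧ p 3 = 0 ∧ p 4 = 0 := by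
  have hA : 0 < (l1 - l3) * (l1 - l4) * (l2 - l4) / (l2 + l3) :=
    div_pos (mul_pos (mul_pos (by linarith) (by linarith)) (by linarith)) s23
  have hB : 0 < (l1 - l4) * (l2 - l3) * (l2 - l4) / (l1 + l3) :=
    div_pos (mul_pos (mul_pos (by linarith) (by linarith)) (by linarith)) s13
  have hC : 0 < (l1 - l3) * (l2 - l3) * (l2 - l4) / (l1 + l4) :=
    div_pos (mul_pos (mul_pos (by linarith) (by linarith)) (by linarith)) s14
  have hD : 0 < (l1 - l3) * (l1 - l4) * (l2 - l3) / (l2 + l4) :=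
    div_pos (mul_pos (mul_pos (by linarith) (by linarith)) (by linarith)) s24
  have t0 := mul_nonneg hA.le (sq_nonneg (p 0))
  have t1 := mul_nonneg hB.le (sq_nonneg (p 1))
  have t3 := mul_nonneg hC.le (sq_nonneg (p 3))
  have t4 := mul_nonneg hD.le (sq_nonneg (p 4))
  unfold quadIntegral at hp
  have zero_of {c x : ℝ} (hc : 0 < c) (h : c * x ^ 2 ≤ 0) : x = 0 :=
    pow_eq_zero_iff two_ne_zero |>.1 (le_antisymm (nonpos_of_mul_nonpos_right h hc) (sq_nonneg x))
  exact ⟨zero_of hA (by linarith), zero_of hB (by linarith), zero_of hC (by linarith),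
    zero_of hD (by linarith)⟩

lemma equilibrium_lt_lyapunovFn {l1 l2 l3 l4 : ℝ} (h12 : l2 < l1) (h23 : l3 < l2)
    (h34 : l4 < l3) (s13 : 0 < l1 + l3) (s14 : 0 < l1 + l4) (s23 : 0 < l2 + l3)
    (s24 : 0 < l2 + l4) {u v : ℝ} {p : Fin 6 → ℝ} (hp : p ≠ ![0, 0, u, 0, 0, v])
    (hdist : dist p ![0, 0, u, 0, 0, v] < min |u - v| |u + v|) :
    lyapunovFn l1 l2 l3 l4 u v ![0, 0, u, 0, 0, v] < lyapunovFn l1 l2 l3 l4 u v p := by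
  rw [lyapunovFn_equilibrium]
  by_contra! hV
  unfold lyapunovFn at hV
  have hC₁ := sq_nonneg (casimirSq p - (u ^ 2 + v ^ 2))
  have hC₂ := sq_nonneg (casimirDot p - u * v)
  obtain ⟨h0, h1, h3, h4⟩ :=
    eq_zero_of_quadIntegral_nonpos h12 h23 h34 s13 s14 s23 s24 (p := p) (by linarith)
  have hQ : quadIntegral l1 l2 l3 l4 p = 0 := by simp [quadIntegral, h0, h1, h3, h4]
  have hsq : p 2 ^ 2 + p 5 ^ 2 = u ^ 2 + v ^ 2 := by
    have := pow_eq_zero_iff two_ne_zero |>.1 (le_antisymm (by linarith) hC₁)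
    simp only [casimirSq, h0, h1, h3, h4] at this
    linarith
  have hmul : p 2 * p 5 = u * v := by
    have := pow_eq_zero_iff two_ne_zero |>.1 (le_antisymm (by linarith) hC₂)
    simp only [casimirDot, h0, h1, h3, h4] at this
    linarith
  have hdist2 : |p 2 - u| < min |u - v| |u + v| := by
    simpa [Real.dist_eq] using (dist_le_pi_dist p ![0, 0, u, 0, 0, v] 2).trans_lt hdist
  have hdist5 : |p 5 - v| < min |u - v| |u + v| := by
    simpa [Real.dist_eq] using (dist_le_pi_dist p ![0, 0, u, 0, 0, v] 5).trans_lt hdist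
  obtain ⟨h2, h5⟩ := eq_of_sq_add_sq_eq_of_mul_eq hsq hmul
    (by linarith [min_le_right |u - v| |u + v|]) (by linarith [min_le_left |u - v| |u + v|])
  exact hp (by ext i; fin_cases i <;> simp [h0, h1, h2, h3, h4, h5])

theorem t3_equilibria_stable
    (l1 l2 l3 l4 : ℝ) (h12 : l2 < l1) (h23 : l3 < l2) (h34 : l4 < l3)
    (s12 : 0 < l1 + l2) (s13 : 0 < l1 + l3) (s14 : 0 < l1 + l4)
    (s23 : 0 < l2 + l3) (s24 : 0 < l2 + l4) (s34 : 0 < l3 + l4)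
    (u v : ℝ) (huv : u ^ 2 ≠ v ^ 2) :
    vf l1 l2 l3 l4 ![0, 0, u, 0, 0, v] = 0 ∧
      IsLyapunovStable l1 l2 l3 l4 ![0, 0, u, 0, 0, v] := by
  refine ⟨by ext i; fin_cases i <;> simp [vf], fun ε hε => ?_⟩
  have hr : 0 < min |u - v| |u + v| := by
    have : (u - v) * (u + v) ≠ 0 := fun h => huv (by linear_combination h)
    exact lt_min (abs_pos.2 (left_ne_zero_of_mul this)) (abs_pos.2 (right_ne_zero_of_mul this))
  obtain ⟨δ, hδ, hstable⟩ := exists_dist_lt_of_strictLocalMin (continuous_lyapunovFn ..) hr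
    (fun p hp hdist => equilibrium_lt_lyapunovFn h12 h23 h34 s13 s14 s23 s24 hp hdist) hε
  refine ⟨δ, hδ, fun f hf h0 t ht => ?_⟩
  have hV t := lyapunovFn_comp_solution hf s12.ne' s13.ne' s14.ne' s23.ne' s24.ne' s34.ne' u v t
  have hcont : Continuous f := continuous_iff_continuousAt.2 fun s => (hf s).continuousAt
  simpa only [dist_eq_norm] using
    hstable f hcont (fun t _ => (hV t).le) (by rwa [dist_eq_norm]) t ht
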